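/- Let (E,ℒ,ℬ) be a weakly left-resolving labelled space with ℬ closed under relative complements, let α,β be nonempty finite labelled paths and γ ∈ ℒ^{≤∞}(E) be such that αβγ ∈ ℒ^{≤∞}(E). Then (i) T_{(αβ)γ} ⊆ T_{(β)γ}, and (ii) G_{(αβ)γ} = G_{(α)βγ} ∘ G_{(β)γ} on T_{(αβ)γ}. -/

import Mathlib

open Set

/-- A filter in the sub-poset `P` of a powerset, ordered by inclusion, with least
element `∅`: nonempty, upward-closed within `P`, downward-directed, not containing `∅`. -/
def IsFilterIn {V : Type*} (P F : Set (Set V)) : Prop :=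
  F ⊆ P ∧ F.Nonempty ∧ ∅ ∉ F ∧
    (∀ X ∈ F, ∀ Y ∈ P, X ⊆ Y → Y ∈ F) ∧
    (∀ X ∈ F, ∀ Y ∈ F, ∃ Z ∈ F, Z ⊆ X ∧ Z ⊆ Y)

/-- An ultrafilter in `P` is a maximal filter in `P`. -/
def IsUltrafilterIn {V : Type*} (P F : Set (Set V)) : Prop :=
  IsFilterIn P F ∧ ∀ G : Set (Set V), IsFilterIn P G → F ⊆ G → G = F

/-- A labelled graph: a directed graph with source, range and a surjective labelling map. -/
structure LGraph (V Edg A : Type*) where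
  src : Edg → V
  rng : Edg → V
  lbl : Edg → A
  lbl_surj : Function.Surjective lbl

namespace LGraph

variable {V Edg A : Type*} (G : LGraph V Edg A)

/-- A finite path: a list of composable edges. -/
def IsPath (p : List Edg) : Prop := p.Chain' fun e f => G.rng e = G.src f

/-- The relative range `r(S, α)`, with the convention `r(S, ω) = S`. -/
def relR (S : Set V) : List A → Set V
  | [] => S
  | a :: w =>
      {v | ∃ p : List Edg, G.IsPath p ∧ p.map G.lbl = a :: w ∧
        ∃ h : p ≠ [], G.src (p.head h) ∈ S ∧ G.rng (p.getLast h) = v}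

/-- `α ∈ ℒ*(E)` : a finite labelled path (including the empty word). -/
def IsLbl (α : List A) : Prop := ∃ p : List Edg, G.IsPath p ∧ p.map G.lbl = α

/-- An infinite labelled path. -/
def IsLblInf (α : ℕ → A) : Prop :=
  ∃ p : ℕ → Edg, (∀ n, G.rng (p n) = G.src (p (n + 1))) ∧ ∀ n, G.lbl (p n) = α n

end LGraph

/-- A labelled space: a labelled graph together with an accommodating family `ℬ`. -/
structure LabelledSpace (V Edg A : Type*) extends LGraph V Edg A where
  ℬ : Set (Set V)
  inter_mem : ∀ ⦃X Y : Set V⦄, X ∈ ℬ → Y ∈ ℬ → X ∩ Y ∈ ℬ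
  union_mem : ∀ ⦃X Y : Set V⦄, X ∈ ℬ → Y ∈ ℬ → X ∪ Y ∈ ℬ
  range_mem : ∀ α : List A, α ≠ [] → toLGraph.IsLbl α → toLGraph.relR Set.univ α ∈ ℬ
  relR_mem : ∀ ⦃X : Set V⦄, X ∈ ℬ → ∀ α : List A, toLGraph.IsLbl α → toLGraph.relR X α ∈ ℬ

/-- Words of length `≤ ∞`: finite words are lists, infinite words are sequences. -/
abbrev LWord (A : Type*) := List A ⊕ (ℕ → A)

/-- The length of a word in `ℕ∞`. -/
def wlen {A : Type*} : LWord A → ℕ∞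
  | .inl l => (l.length : ℕ∞)
  | .inr _ => (⊤ : ℕ∞)

/-- `α_{1,n}` : the initial subword of length `n`. -/
def wtake {A : Type*} : LWord A → ℕ → List A
  | .inl l, n => l.take n
  | .inr f, n => (List.range n).map f

/-- Concatenation of a finite word with a word. -/
def wappend {A : Type*} (α : List A) : LWord A → LWord A
  | .inl l => .inl (α ++ l)
  | .inr f => .inr fun n => if h : n < α.length then α.get ⟨n, h⟩ else f (n - α.length)

namespace LabelledSpace

variable {V Edg A : Type*} (L : LabelledSpace V Edg A)

abbrev relR : Set V → List A → Set V := L.toLGraph.relR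

abbrev IsLbl : List A → Prop := L.toLGraph.IsLbl

/-- `r(α)` : the range of a word. -/
def wr (α : List A) : Set V := L.relR Set.univ α

/-- Membership in `ℒ^{≤∞}(E)`. -/
def IsLWord : LWord A → Prop
  | .inl l => L.IsLbl l
  | .inr f => L.toLGraph.IsLblInf f

/-- Weakly left-resolving. -/
def WeaklyLeftResolving : Prop :=
  ∀ ⦃X Y : Set V⦄, X ∈ L.ℬ → Y ∈ L.ℬ → ∀ α : List A, α ≠ [] →
    L.relR (X ∩ Y) α = L.relR X α ∩ L.relR Y α

/-- `ℬ` is closed under relative complements. -/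
def ClosedUnderRelComplements : Prop :=
  ∀ ⦃X Y : Set V⦄, X ∈ L.ℬ → Y ∈ L.ℬ → X \ Y ∈ L.ℬ

/-- `ℬ_α = {A ∈ ℬ : A ⊆ r(α)}`. -/
def Bw (α : List A) : Set (Set V) := {X | X ∈ L.ℬ ∧ X ⊆ L.wr α}

/-- `X_α` : the set of ultrafilters in `ℬ_α`. -/
def Xw (α : List A) : Set (Set (Set V)) := {F | IsUltrafilterIn (L.Bw α) F}

/-- `X_{(α)β} = {F ∈ X_β : r(αβ) ∈ F}`, with the convention `X_{(ω)β} = X_β`. -/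
def XP (α β : List A) : Set (Set (Set V)) :=
  match α with
  | [] => L.Xw β
  | a :: l => {F | F ∈ L.Xw β ∧ L.wr ((a :: l) ++ β) ∈ F}

/-- `g_{(α)β}(F) = {C ∩ r(αβ) : C ∈ F}`. -/
def gmap (α β : List A) (F : Set (Set V)) : Set (Set V) :=
  {D | ∃ C ∈ F, D = C ∩ L.wr (α ++ β)}

/-- `h_{[α]β}(F)` : the upward closure of `F` in `ℬ_β` (only depends on `β`). -/
def hmap (β : List A) (F : Set (Set V)) : Set (Set V) :=
  {D | D ∈ L.Bw β ∧ ∃ C ∈ F, C ⊆ D}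

/-- `f_{β[γ]}(F) = {A ∈ ℬ_β : r(A,γ) ∈ F}`. -/
def fmap (β γ : List A) (F : Set (Set V)) : Set (Set V) :=
  {X | X ∈ L.Bw β ∧ L.relR X γ ∈ F}

/-- `X_α^{sink}`. -/
def Xsink (α : List A) : Set (Set (Set V)) :=
  {F | F ∈ L.Xw α ∧ ∀ b : A, ∃ X ∈ F, L.relR X [b] = ∅}

/-- A complete family (of filters) for the word `w`. -/
def IsCompleteFamily (w : LWord A) (F : ℕ → Set (Set V)) : Prop :=
  (∀ n : ℕ, 0 < n → (n : ℕ∞) ≤ wlen w → IsFilterIn (L.Bw (wtake w n)) (F n)) ∧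
  (IsFilterIn (L.Bw []) (F 0) ∨ F 0 = ∅) ∧
  ∀ n : ℕ, (n : ℕ∞) < wlen w →
    F n = {X | X ∈ L.Bw (wtake w n) ∧ L.relR X ((wtake w (n + 1)).drop n) ∈ F (n + 1)}

/-- A complete family of ultrafilters for the word `w`. -/
def IsCompleteUltraFamily (w : LWord A) (F : ℕ → Set (Set V)) : Prop :=
  (∀ n : ℕ, 0 < n → (n : ℕ∞) ≤ wlen w → IsUltrafilterIn (L.Bw (wtake w n)) (F n)) ∧
  (IsUltrafilterIn (L.Bw []) (F 0) ∨ F 0 = ∅) ∧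
  ∀ n : ℕ, (n : ℕ∞) < wlen w →
    F n = {X | X ∈ L.Bw (wtake w n) ∧ L.relR X ((wtake w (n + 1)).drop n) ∈ F (n + 1)}

/-- Membership in `E(S)`: `none` is the zero element, `some (α, X)` stands for `(α, X, α)`. -/
def ESmem : Option (List A × Set V) → Prop
  | none => True
  | some p => p.2 ∈ L.Bw p.1 ∧ p.2 ≠ ∅

/-- `E(S) ∖ {0}`. -/
def ESnz : Set (Option (List A × Set V)) := {p | L.ESmem p ∧ p ≠ none}

/-- The natural order on `E(S)`: `(α,A,α) ≤ (β,B,β)` iff `α = βα'` and `A ⊆ r(B,α')`. -/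
def ESle : Option (List A × Set V) → Option (List A × Set V) → Prop
  | none, _ => True
  | some _, none => False
  | some p, some q => ∃ γ : List A, p.1 = q.1 ++ γ ∧ p.2 ⊆ L.relR q.2 γ

open Classical in
/-- The product in the semilattice `E(S)`. -/
noncomputable def ESmul :
    Option (List A × Set V) → Option (List A × Set V) → Option (List A × Set V)
  | none, _ => none
  | some _, none => none
  | some p, some q =>
    if p.1 <+: q.1 then
      if L.relR p.2 (q.1.drop p.1.length) ∩ q.2 = ∅ then none
      else some (q.1, L.relR p.2 (q.1.drop p.1.length) ∩ q.2)
    else if q.1 <+: p.1 then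
      if p.2 ∩ L.relR q.2 (p.1.drop q.1.length) = ∅ then none
      else some (p.1, p.2 ∩ L.relR q.2 (p.1.drop q.1.length))
    else none

/-- A filter in `E(S)`. -/
def IsESFilter (ξ : Set (Option (List A × Set V))) : Prop :=
  ξ ⊆ L.ESnz ∧ ξ.Nonempty ∧
    (∀ p ∈ ξ, ∀ q, L.ESmem q → L.ESle p q → q ∈ ξ) ∧
    (∀ p ∈ ξ, ∀ q ∈ ξ, ∃ z ∈ ξ, L.ESle z p ∧ L.ESle z q)

/-- `Z` is a cover for `x` in `E(S)`. -/
def ESCover (x : Option (List A × Set V)) (Z : Set (Option (List A × Set V))) : Prop :=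
  (∀ z ∈ Z, L.ESmem z ∧ L.ESle z x) ∧
  ∀ y, L.ESmem y → y ≠ none → L.ESle y x → ∃ z ∈ Z, L.ESmul y z ≠ none

/-- A tight filter in `E(S)`: every finite cover of an element of the filter meets the filter. -/
def IsTightESFilter (ξ : Set (Option (List A × Set V))) : Prop :=
  L.IsESFilter ξ ∧
    ∀ x ∈ ξ, ∀ Z : Set (Option (List A × Set V)), Z.Finite → L.ESCover x Z →
      (Z ∩ ξ).Nonempty

/-- The filter in `E(S)` associated with the pair `(w, F)` of a word together with a
(complete) family: `ξ = ⋃_n ⋃_{X ∈ F n} ↑(w_{1,n}, X)`. -/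
def filterOf (w : LWord A) (F : ℕ → Set (Set V)) : Set (Option (List A × Set V)) :=
  {p | L.ESmem p ∧
    ∃ n : ℕ, (n : ℕ∞) ≤ wlen w ∧ ∃ X ∈ F n, L.ESle (some (wtake w n, X)) p}

/-- `ξ_n = {X : (w_{1,n}, X, w_{1,n}) ∈ ξ}`. -/
def xiN (_L : LabelledSpace V Edg A) (w : LWord A) (ξ : Set (Option (List A × Set V)))
    (n : ℕ) : Set (Set V) :=
  {X | some (wtake w n, X) ∈ ξ}

/-- `T_w` : the tight filters in `E(S)` whose associated word is `w`. -/
def Tw (w : LWord A) : Set (Set (Option (List A × Set V))) :=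
  {ξ | L.IsTightESFilter ξ ∧
    ∃ F : ℕ → Set (Set V), L.IsCompleteFamily w F ∧ ξ = L.filterOf w F}

/-- `T_{(α)w} = {ξ ∈ T_w : ξ₀ is an ultrafilter in ℬ with r(α) ∈ ξ₀}`, with
`T_{(ω)w} = T_w`. -/
def TwP (α : List A) (w : LWord A) : Set (Set (Option (List A × Set V))) :=
  match α with
  | [] => L.Tw w
  | a :: l =>
    {ξ | ξ ∈ L.Tw w ∧ IsUltrafilterIn (L.Bw []) (L.xiN w ξ 0) ∧ L.wr (a :: l) ∈ L.xiN w ξ 0}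

/-- The family `{J_i}` for `αw` built from a family `{F_n}` for `w`:
`J_{|α|+n} = g_{(α)w_{1,n}}(F_n)` for `1 ≤ n ≤ |w|` and
`J_i = f_{α_{1,i}[α_{i+1,|α|}w₁]}(J_{|α|+1})` for `0 ≤ i ≤ |α|`
(reading `J_{|α|} = g_{(α)ω}(F₀)` and `J_i = f_{α_{1,i}[α_{i+1,|α|}]}(J_{|α|})` when `w = ω`). -/
def Jfamily (α : List A) (w : LWord A) (F : ℕ → Set (Set V)) : ℕ → Set (Set V) :=
  match w with
  | .inl [] => fun i =>
      if i < α.length then L.fmap (α.take i) (α.drop i) (L.gmap α [] (F 0))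
      else L.gmap α [] (F 0)
  | w => fun i =>
      if i ≤ α.length then
        L.fmap (α.take i) (α.drop i ++ wtake w 1) (L.gmap α (wtake w 1) (F 1))
      else L.gmap α (wtake w (i - α.length)) (F (i - α.length))

/-- `G_{(α)w}` as an operation on filters in `E(S)`. -/
def Gmap (α : List A) (w : LWord A) (ξ : Set (Option (List A × Set V))) :
    Set (Option (List A × Set V)) :=
  L.filterOf (wappend α w) (L.Jfamily α w (L.xiN w ξ))

/-- The family `{η_n}` for `w` built from a family for `αw`:
`η_n = h_{[α]w_{1,n}}(F_{|α|+n})`. -/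
def Hfam (α : List A) (w : LWord A) (F : ℕ → Set (Set V)) : ℕ → Set (Set V) :=
  fun n => L.hmap (wtake w n) (F (α.length + n))

/-- `H_{[α]w}` as an operation on filters in `E(S)`. -/
def Hmap (α : List A) (w : LWord A) (ξ : Set (Option (List A × Set V))) :
    Set (Option (List A × Set V)) :=
  L.filterOf w (L.Hfam α w (L.xiN (wappend α w) ξ))

end LabelledSpace

/-- The topology of pointwise convergence on sets of subsets of `V`
(product topology with discrete coordinates, via indicator functions). -/
def memTopology (V : Type*) : TopologicalSpace (Set (Set V)) :=
  show TopologicalSpace (Set V → Prop) from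
    @Pi.topologicalSpace (Set V) (fun _ => Prop) (fun _ => ⊥)

/-!
`G_{(θ)w}(ξ)` is the filter generated by the family `J`, and below level `|θ|` that family is
pulled back from level `|θ| + 1` (level `|θ|` if `w = ω`); so `G_{(θ)w}(ξ)` is generated by the
sets `C ∩ r(θ w_{1,n})`, `C ∈ ξ_n`, at the levels `|θ| + n`. For `θ = αβ` such a generator is
also one of `G_{(α)βw}(G_{(β)w}(ξ))`, because `r(αβ w_{1,n}) ∈ ξ_n` (propagate `r(αβ) ∈ ξ₀` along
the complete family). Conversely a generator `D ∩ r(α (βw)_{1,m})` of the latter has `D` above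
some `C ∩ r(β w_{1,n})`, and then it dominates `C ∩ r(αβ w_{1,n})`: this is where weak
left-resolvingness enters. Part (i) is upward closure of the ultrafilter `ξ₀`, as
`r(αβ) ⊆ r(β)`.
-/

theorem IsFilterIn.inter_mem {V : Type*} {P F : Set (Set V)} (hF : IsFilterIn P F)
    {X Y : Set V} (hX : X ∈ F) (hY : Y ∈ F) (hXY : X ∩ Y ∈ P) : X ∩ Y ∈ F := by
  obtain ⟨Z, hZ, hZX, hZY⟩ := hF.2.2.2.2 X hX Y hY
  exact hF.2.2.2.1 Z hZ _ hXY (subset_inter hZX hZY)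

namespace LGraph

variable {V Edg A : Type*} (G : LGraph V Edg A)

theorem mem_relR {X : Set V} {v : V} :
    ∀ {γ : List A}, γ ≠ [] → (v ∈ G.relR X γ ↔ ∃ p : List Edg, G.IsPath p ∧
      p.map G.lbl = γ ∧ ∃ h : p ≠ [], G.src (p.head h) ∈ X ∧ G.rng (p.getLast h) = v)
  | [], h => absurd rfl h
  | _ :: _, _ => Iff.rfl

theorem relR_mono {X Y : Set V} (h : X ⊆ Y) : ∀ γ : List A, G.relR X γ ⊆ G.relR Y γ
  | [] => h
  | _ :: _ => fun _ ⟨p, hp, hm, hne, hs, hr⟩ => ⟨p, hp, hm, hne, h hs, hr⟩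

theorem relR_relR_subset {X : Set V} {γ δ : List A} (hγ : γ ≠ []) (hδ : δ ≠ []) :
    G.relR (G.relR X γ) δ ⊆ G.relR X (γ ++ δ) := by
  intro v hv
  rw [G.mem_relR hδ] at hv
  obtain ⟨q, hq, hqm, hqe, hs, hr⟩ := hv
  obtain ⟨p, hp, hpm, hpe, hps, hpr⟩ := (G.mem_relR hγ).1 hs
  rw [G.mem_relR (by simp [hγ])]
  refine ⟨p ++ q, hp.append hq ?_, by simp [hpm, hqm], by simp [hpe], ?_, ?_⟩
  · intro x hx y hy
    rw [List.getLast?_eq_some_getLast hpe, Option.mem_def, Option.some_inj] at hx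
    rw [List.head?_eq_some_head hqe, Option.mem_def, Option.some_inj] at hy
    subst hx hy
    exact hpr
  · rwa [List.head_append_of_ne_nil hpe]
  · rwa [List.getLast_append_of_ne_nil _ hqe]

theorem relR_subset_relR_relR {X : Set V} {γ δ : List A} (hγ : γ ≠ []) (hδ : δ ≠ []) :
    G.relR X (γ ++ δ) ⊆ G.relR (G.relR X γ) δ := by
  intro v hv
  obtain ⟨p, hp, hm, hne, hs, hr⟩ := (G.mem_relR (by simp [hγ])).1 hv
  have hlen : p.length = γ.length + δ.length := by
    rw [← List.length_map (as := p) G.lbl, hm, List.length_append]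
  have hδl : 0 < δ.length := List.length_pos_iff.mpr hδ
  have hγl : 0 < γ.length := List.length_pos_iff.mpr hγ
  have h1e : p.take γ.length ≠ [] := by
    rw [← List.length_pos_iff, List.length_take]; omega
  have h2e : p.drop γ.length ≠ [] := by
    rw [← List.length_pos_iff, List.length_drop]; omega
  have hjoin : p.take γ.length ++ p.drop γ.length = p := List.take_append_drop _ _
  have hlink := (List.isChain_append.mp (hjoin.symm ▸ hp : G.IsPath (_ ++ _))).2.2
  rw [G.mem_relR hδ]
  refine ⟨p.drop γ.length, hp.drop _, by rw [List.map_drop, hm, List.drop_left' rfl], h2e,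
    ?_, by rwa [List.getLast_drop h2e]⟩
  rw [G.mem_relR hγ]
  refine ⟨p.take γ.length, hp.infix (List.take_prefix _ _).isInfix,
    by rw [List.map_take, hm, List.take_left' rfl], h1e, by rwa [List.head_take h1e], ?_⟩
  exact hlink _ (List.getLast?_eq_some_getLast h1e) _ (List.head?_eq_some_head h2e)

theorem relR_relR (X : Set V) (γ δ : List A) :
    G.relR (G.relR X γ) δ = G.relR X (γ ++ δ) := by
  rcases eq_or_ne γ [] with rfl | hγ
  · rfl
  rcases eq_or_ne δ [] with rfl | hδ
  · simp [LGraph.relR]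
  exact (G.relR_relR_subset hγ hδ).antisymm (G.relR_subset_relR_relR hγ hδ)

theorem IsLbl.infix {G : LGraph V Edg A} {l l' : List A} (h : G.IsLbl l) (h' : l' <:+: l) :
    G.IsLbl l' := by
  obtain ⟨s, t, rfl⟩ := h'
  obtain ⟨p, hp, hm⟩ := h
  refine ⟨(p.drop s.length).take l'.length,
    hp.infix ((List.take_prefix _ _).isInfix.trans (List.drop_suffix _ _).isInfix), ?_⟩
  rw [List.append_assoc] at hm
  rw [List.map_take, List.map_drop, hm, List.drop_left' rfl, List.take_left' rfl]

end LGraph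

section Words

variable {A : Type*}

theorem wtake_zero (w : LWord A) : wtake w 0 = [] := by cases w <;> rfl

theorem wlen_wappend (θ : List A) (w : LWord A) :
    wlen (wappend θ w) = θ.length + wlen w := by
  cases w <;> simp [wappend, wlen]

theorem natCast_length_add_le_wlen_wappend {θ : List A} {w : LWord A} {n : ℕ} :
    ((θ.length + n : ℕ) : ℕ∞) ≤ wlen (wappend θ w) ↔ (n : ℕ∞) ≤ wlen w := by
  rw [wlen_wappend, Nat.cast_add]
  exact WithTop.add_le_add_iff_left (ENat.natCast_ne_top _)

theorem one_le_wlen {w : LWord A} (h : w ≠ .inl []) : 1 ≤ wlen w := by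
  rcases w with (_ | ⟨_, l⟩) | f
  · exact absurd rfl h
  · simp [wlen]
  · simp [wlen]

theorem length_wtake {w : LWord A} {n : ℕ} (h : (n : ℕ∞) ≤ wlen w) :
    (wtake w n).length = n := by
  cases w with
  | inl l =>
    simp only [wlen, Nat.cast_le] at h
    simp [wtake, h]
  | inr f => simp [wtake]

theorem wtake_take {w : LWord A} {n m : ℕ} (h : n ≤ m) :
    (wtake w m).take n = wtake w n := by
  cases w with
  | inl l => simp [wtake, List.take_take, h]
  | inr f => simp [wtake, ← List.map_take, List.take_range, h]

theorem wtake_append_drop {w : LWord A} {n m : ℕ} (h : n ≤ m) :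
    wtake w n ++ (wtake w m).drop n = wtake w m := by
  conv_lhs => rw [← wtake_take h]
  exact List.take_append_drop _ _

theorem drop_wtake_append_drop {w : LWord A} {n j : ℕ} (hn : n ≤ j)
    (hj : (j : ℕ∞) ≤ wlen w) :
    (wtake w j).drop n ++ (wtake w (j + 1)).drop j = (wtake w (j + 1)).drop n := by
  conv_rhs => rw [← wtake_append_drop (Nat.le_succ j)]
  rw [List.drop_append_of_le_length (by rw [length_wtake hj]; exact hn)]

theorem eq_drop_of_wtake_eq_append {w : LWord A} {n m : ℕ} (hn : (n : ℕ∞) ≤ wlen w)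
    {γ : List A} (h : wtake w m = wtake w n ++ γ) : n ≤ m ∧ γ = (wtake w m).drop n := by
  refine ⟨?_, by rw [h, List.drop_left' (length_wtake hn)]⟩
  calc n = (wtake w n).length := (length_wtake hn).symm
    _ ≤ (wtake w m).length := by rw [h, List.length_append]; omega
    _ ≤ m := by cases w <;> simp [wtake]

theorem wtake_wappend_of_le {θ : List A} {n : ℕ} (h : n ≤ θ.length) (w : LWord A) :
    wtake (wappend θ w) n = θ.take n := by
  cases w with
  | inl l => simp [wappend, wtake, List.take_append_of_le_length h]
  | inr f =>
    simp only [wappend, wtake]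
    refine List.ext_getElem (by simp; omega) fun i h1 h2 => ?_
    simp only [List.getElem_map, List.getElem_range, List.getElem_take]
    rw [dif_pos (by simp at h2; omega)]
    rfl

theorem wtake_wappend_length_add (θ : List A) (w : LWord A) (n : ℕ) :
    wtake (wappend θ w) (θ.length + n) = θ ++ wtake w n := by
  cases w with
  | inl l => simp [wappend, wtake, List.take_append]
  | inr f =>
    simp only [wappend, wtake]
    refine List.ext_getElem (by simp) fun i h1 h2 => ?_
    simp only [List.getElem_map, List.getElem_range]
    rcases lt_or_ge i θ.length with hi | hi
    · rw [dif_pos hi, List.getElem_append_left hi]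
      rfl
    · rw [dif_neg (not_lt.mpr hi), List.getElem_append_right hi]
      simp

theorem wappend_wappend (α β : List A) (w : LWord A) :
    wappend α (wappend β w) = wappend (α ++ β) w := by
  cases w with
  | inl l => simp [wappend]
  | inr f =>
    simp only [wappend, Sum.inr.injEq, List.length_append]
    funext n
    rcases lt_or_ge n α.length with h1 | h1
    · rw [dif_pos h1, dif_pos (by omega)]
      simp [List.getElem_append_left h1]
    rw [dif_neg (not_lt.mpr h1)]
    rcases lt_or_ge (n - α.length) β.length with h2 | h2
    · rw [dif_pos h2, dif_pos (by omega)]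
      simp [List.getElem_append_right h1]
    · rw [dif_neg (not_lt.mpr h2), dif_neg (by omega), Nat.sub_sub]

end Words

namespace LabelledSpace

variable {V Edg A : Type*} (L : LabelledSpace V Edg A)

theorem relR_mono {X Y : Set V} (h : X ⊆ Y) (γ : List A) : L.relR X γ ⊆ L.relR Y γ :=
  L.toLGraph.relR_mono h γ

theorem relR_relR (X : Set V) (γ δ : List A) :
    L.relR (L.relR X γ) δ = L.relR X (γ ++ δ) :=
  L.toLGraph.relR_relR X γ δ

theorem wr_append (γ δ : List A) : L.wr (γ ++ δ) = L.relR (L.wr γ) δ :=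
  (L.relR_relR _ _ _).symm

theorem wr_append_subset (γ δ : List A) : L.wr (γ ++ δ) ⊆ L.wr δ := by
  rw [L.wr_append]
  exact L.relR_mono (subset_univ _) δ

theorem isLbl_wtake {w : LWord A} (hw : L.IsLWord w) (n : ℕ) : L.IsLbl (wtake w n) := by
  cases w with
  | inl l => exact LGraph.IsLbl.infix hw (List.take_prefix _ _).isInfix
  | inr f =>
    obtain ⟨p, hp, hl⟩ := hw
    refine ⟨(List.range n).map p, ?_, ?_⟩
    · refine List.isChain_iff_getElem.2 fun i hi => ?_
      simp only [List.getElem_map, List.getElem_range]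
      exact hp i
    · simp only [wtake, List.map_map]
      exact List.map_congr_left fun i _ => hl i

theorem relR_drop_wtake_mem_Bw {w : LWord A} (hw : L.IsLWord w) {n j : ℕ} (hn : n ≤ j)
    {X : Set V} (hX : X ∈ L.Bw (wtake w n)) :
    L.relR X ((wtake w j).drop n) ∈ L.Bw (wtake w j) := by
  refine ⟨L.relR_mem hX.1 _ ((L.isLbl_wtake hw j).infix (List.drop_suffix _ _).isInfix), ?_⟩
  have := L.relR_mono hX.2 ((wtake w j).drop n)
  rwa [← L.wr_append, wtake_append_drop hn] at this

theorem ESle_refl (p : Option (List A × Set V)) : L.ESle p p := by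
  rcases p with _ | q
  · trivial
  · exact ⟨[], by simp, subset_rfl⟩

theorem ESle_some_of_subset {σ : List A} {S T : Set V} (h : S ⊆ T) :
    L.ESle (some (σ, S)) (some (σ, T)) :=
  ⟨[], by simp, h⟩

theorem ESle_trans {p q r : Option (List A × Set V)}
    (h₁ : L.ESle p q) (h₂ : L.ESle q r) : L.ESle p r := by
  rcases p with _ | p
  · trivial
  rcases q with _ | q
  · exact h₁.elim
  rcases r with _ | r
  · exact h₂.elim
  obtain ⟨γ, hγ, hpq⟩ := h₁
  obtain ⟨δ, hδ, hqr⟩ := h₂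
  refine ⟨δ ++ γ, by rw [hγ, hδ, List.append_assoc], hpq.trans ?_⟩
  rw [← L.relR_relR]
  exact L.relR_mono hqr γ

theorem ESle_append_left (hwlr : L.WeaklyLeftResolving) {θ σ τ : List A} {S D : Set V}
    (hD : D ∈ L.ℬ) (hθτ : L.wr (θ ++ τ) ∈ L.ℬ) (hS : S ⊆ L.wr (θ ++ σ))
    (h : L.ESle (some (σ, S)) (some (τ, D))) :
    L.ESle (some (θ ++ σ, S)) (some (θ ++ τ, D ∩ L.wr (θ ++ τ))) := by
  obtain ⟨γ, rfl, hSD⟩ := h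
  refine ⟨γ, by simp, ?_⟩
  rcases eq_or_ne γ [] with rfl | hγ
  · simp_all [LGraph.relR]
  rw [show L.relR (D ∩ L.wr (θ ++ τ)) γ = L.relR D γ ∩ L.wr (θ ++ τ ++ γ) by
    rw [hwlr hD hθτ γ hγ, L.wr_append (θ ++ τ) γ]]
  exact subset_inter hSD (by simpa using hS)

theorem mem_filterOf_self {w : LWord A} {F : ℕ → Set (Set V)} {n : ℕ} {X : Set V}
    (hF : IsFilterIn (L.Bw (wtake w n)) (F n)) (hn : (n : ℕ∞) ≤ wlen w) (hX : X ∈ F n) :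
    some (wtake w n, X) ∈ L.filterOf w F :=
  ⟨⟨hF.1 hX, fun h => hF.2.2.1 (h ▸ hX)⟩, n, hn, X, hX, L.ESle_refl _⟩

section CompleteFamily

variable {L}

theorem IsCompleteFamily.isFilterIn {w : LWord A} {F : ℕ → Set (Set V)}
    (hF : L.IsCompleteFamily w F) {n : ℕ} (hn : (n : ℕ∞) ≤ wlen w) {X : Set V}
    (hX : X ∈ F n) : IsFilterIn (L.Bw (wtake w n)) (F n) := by
  rcases n.eq_zero_or_pos with rfl | hn0
  · rcases hF.2.1 with h | h
    · rwa [wtake_zero]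
    · simp [h] at hX
  · exact hF.1 n hn0 hn

theorem IsCompleteFamily.relR_mem_iff {w : LWord A} (hw : L.IsLWord w)
    {F : ℕ → Set (Set V)} (hF : L.IsCompleteFamily w F) {n k : ℕ} (hnk : n ≤ k)
    (hk : (k : ℕ∞) ≤ wlen w) {X : Set V} (hX : X ∈ L.Bw (wtake w n)) :
    L.relR X ((wtake w k).drop n) ∈ F k ↔ X ∈ F n := by
  obtain ⟨d, rfl⟩ := Nat.exists_eq_add_of_le hnk
  induction d with
  | zero =>
    rw [Nat.add_zero] at hk ⊢
    rw [List.drop_eq_nil_of_le (length_wtake hk).le]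
    rfl
  | succ d ih =>
    have hlt : ((n + d : ℕ) : ℕ∞) < wlen w :=
      lt_of_lt_of_le (by exact_mod_cast Nat.lt_succ_self _) hk
    rw [← ih (by omega) hlt.le, hF.2.2 _ hlt, Set.mem_ofPred_eq, L.relR_relR,
      drop_wtake_append_drop (by omega) hlt.le, ← add_assoc]
    simp [L.relR_drop_wtake_mem_Bw hw (Nat.le_add_right n d) hX]

theorem IsCompleteFamily.xiN_filterOf {w : LWord A} (hw : L.IsLWord w)
    {F : ℕ → Set (Set V)} (hF : L.IsCompleteFamily w F) {n : ℕ} (hn : (n : ℕ∞) ≤ wlen w) :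
    L.xiN w (L.filterOf w F) n = F n := by
  ext X
  constructor
  · rintro ⟨⟨hXB, -⟩, m, hm, Y, hY, γ, hmn, hYγ⟩
    obtain ⟨hnm, rfl⟩ := eq_drop_of_wtake_eq_append hn hmn
    have hγ := (hF.isFilterIn hm hY).2.2.2.1 Y hY _ (L.relR_drop_wtake_mem_Bw hw hnm hXB) hYγ
    exact (hF.relR_mem_iff hw hnm hm hXB).1 hγ
  · intro hX
    exact L.mem_filterOf_self (hF.isFilterIn hn hX) hn hX

end CompleteFamily

theorem mem_TwP_of_ne_nil {θ : List A} (hθ : θ ≠ []) {w : LWord A}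
    {ξ : Set (Option (List A × Set V))} :
    ξ ∈ L.TwP θ w ↔ ξ ∈ L.Tw w ∧ IsUltrafilterIn (L.Bw []) (L.xiN w ξ 0) ∧
      L.wr θ ∈ L.xiN w ξ 0 := by
  cases θ with
  | nil => exact absurd rfl hθ
  | cons a l => rfl

theorem TwP_append_subset {α β : List A} (hβ : β ≠ []) (hβl : L.IsLbl β) (w : LWord A) :
    L.TwP (α ++ β) w ⊆ L.TwP β w := by
  intro ξ hξ
  obtain ⟨hT, hU, hR⟩ := (L.mem_TwP_of_ne_nil (by simp [hβ])).1 hξ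
  refine (L.mem_TwP_of_ne_nil hβ).2 ⟨hT, hU, hU.1.2.2.2.1 _ hR _ ?_ (L.wr_append_subset α β)⟩
  exact ⟨L.range_mem β hβ hβl, subset_univ _⟩

theorem isFilterIn_xiN_of_mem_TwP {θ : List A} (hθ : θ ≠ []) {w : LWord A}
    (hw : L.IsLWord w) {ξ : Set (Option (List A × Set V))} (hξ : ξ ∈ L.TwP θ w) {n : ℕ}
    (hn : (n : ℕ∞) ≤ wlen w) : IsFilterIn (L.Bw (wtake w n)) (L.xiN w ξ n) := by
  obtain ⟨⟨-, F, hF, rfl⟩, hU, -⟩ := (L.mem_TwP_of_ne_nil hθ).1 hξ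
  rw [hF.xiN_filterOf hw hn]
  rw [hF.xiN_filterOf hw (by simp)] at hU
  rcases n.eq_zero_or_pos with rfl | hn0
  · rw [wtake_zero]
    exact hU.1
  · exact hF.1 n hn0 hn

theorem wr_append_mem_xiN_of_mem_TwP {θ : List A} (hθ : θ ≠ []) {w : LWord A}
    (hw : L.IsLWord w) {ξ : Set (Option (List A × Set V))} (hξ : ξ ∈ L.TwP θ w) {n : ℕ}
    (hn : (n : ℕ∞) ≤ wlen w) : L.wr (θ ++ wtake w n) ∈ L.xiN w ξ n := by
  obtain ⟨⟨-, F, hF, rfl⟩, hU, hR⟩ := (L.mem_TwP_of_ne_nil hθ).1 hξ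
  rw [hF.xiN_filterOf hw hn]
  rw [hF.xiN_filterOf hw (by simp)] at hU hR
  have hθB : L.wr θ ∈ L.Bw (wtake w 0) := by
    rw [wtake_zero]
    exact hU.1.1 hR
  simpa [L.wr_append] using (hF.relR_mem_iff hw (Nat.zero_le n) hn hθB).2 hR

theorem Jfamily_of_ne_nil {w : LWord A} (hw : w ≠ .inl []) (θ : List A)
    (F : ℕ → Set (Set V)) :
    L.Jfamily θ w F = fun i =>
      if i ≤ θ.length then
        L.fmap (θ.take i) (θ.drop i ++ wtake w 1) (L.gmap θ (wtake w 1) (F 1))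
      else L.gmap θ (wtake w (i - θ.length)) (F (i - θ.length)) := by
  rcases w with (_ | ⟨_, _⟩) | _
  · exact absurd rfl hw
  all_goals rfl

-- Level `|θ|` of `J` is `g_{(θ)ω}(ξ₀)` only when `w = ω`; otherwise it is pulled back from
-- level `|θ| + 1`.
theorem Jfamily_length_add {θ : List A} {w : LWord A} {F : ℕ → Set (Set V)} {n : ℕ}
    (hn : (n : ℕ∞) ≤ wlen w) (hpos : 0 < n ∨ w = .inl []) :
    L.Jfamily θ w F (θ.length + n) = L.gmap θ (wtake w n) (F n) := by
  rcases eq_or_ne w (.inl []) with rfl | hw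
  · obtain rfl : n = 0 := by simpa [wlen] using hn
    simp [Jfamily, wtake]
  · simp [L.Jfamily_of_ne_nil hw, (hpos.resolve_right hw).ne']

theorem exists_gmap_le_of_mem_Jfamily {θ : List A} {w : LWord A} {F : ℕ → Set (Set V)}
    {i : ℕ} {X : Set V} (hi : (i : ℕ∞) ≤ wlen (wappend θ w)) (hX : X ∈ L.Jfamily θ w F i) :
    ∃ n : ℕ, (n : ℕ∞) ≤ wlen w ∧ (0 < n ∨ w = .inl []) ∧
      ∃ Y ∈ L.gmap θ (wtake w n) (F n),
        L.ESle (some (θ ++ wtake w n, Y)) (some (wtake (wappend θ w) i, X)) := by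
  have shallow : ∀ σ : List A, i ≤ θ.length →
      L.ESle (some (θ ++ σ, L.relR X (θ.drop i ++ σ))) (some (wtake (wappend θ w) i, X)) :=
    fun σ hiθ => ⟨θ.drop i ++ σ, by
      rw [wtake_wappend_of_le hiθ, ← List.append_assoc, List.take_append_drop], subset_rfl⟩
  have deep : ∀ n : ℕ, i = θ.length + n → (0 < n ∨ w = .inl []) → ∃ n : ℕ,
      (n : ℕ∞) ≤ wlen w ∧ (0 < n ∨ w = .inl []) ∧ ∃ Y ∈ L.gmap θ (wtake w n) (F n),
        L.ESle (some (θ ++ wtake w n, Y)) (some (wtake (wappend θ w) i, X)) := by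
    rintro n rfl hpos
    have hn := natCast_length_add_le_wlen_wappend.1 hi
    rw [L.Jfamily_length_add hn hpos] at hX
    exact ⟨n, hn, hpos, X, hX, by rw [wtake_wappend_length_add]; exact L.ESle_refl _⟩
  rcases eq_or_ne w (.inl []) with rfl | hw
  · have hiθ : i ≤ θ.length := by simpa [wappend, wlen] using hi
    rcases hiθ.lt_or_eq with hiθ | rfl
    · simp only [Jfamily, if_pos hiθ] at hX
      exact ⟨0, by simp, Or.inr rfl, _, by simpa [wtake] using hX.2,
        shallow (wtake (.inl []) 0) hiθ.le⟩
    · exact deep 0 rfl (Or.inr rfl)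
  · by_cases hiθ : i ≤ θ.length
    · rw [L.Jfamily_of_ne_nil hw] at hX
      simp only [if_pos hiθ] at hX
      exact ⟨1, one_le_wlen hw, Or.inl one_pos, _, hX.2, shallow _ hiθ⟩
    · exact deep (i - θ.length) (by omega) (Or.inl (by omega))

theorem exists_gmap_le_of_mem_Gmap {θ : List A} {w : LWord A}
    {ξ : Set (Option (List A × Set V))} {p : Option (List A × Set V)}
    (hp : p ∈ L.Gmap θ w ξ) :
    ∃ n : ℕ, (n : ℕ∞) ≤ wlen w ∧ (0 < n ∨ w = .inl []) ∧ ∃ C ∈ L.xiN w ξ n,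
      L.ESle (some (θ ++ wtake w n, C ∩ L.wr (θ ++ wtake w n))) p := by
  obtain ⟨-, i, hi, X, hX, hXp⟩ := hp
  obtain ⟨n, hn, hpos, _, ⟨C, hC, rfl⟩, hle⟩ := L.exists_gmap_le_of_mem_Jfamily hi hX
  exact ⟨n, hn, hpos, C, hC, L.ESle_trans hle hXp⟩

theorem some_mem_Gmap {θ : List A} {w : LWord A} {ξ : Set (Option (List A × Set V))}
    {n : ℕ} (hn : (n : ℕ∞) ≤ wlen w) (hpos : 0 < n ∨ w = .inl []) {C : Set V}
    (hC : C ∈ L.xiN w ξ n) (hCB : C ∈ L.Bw (θ ++ wtake w n)) (hne : C ≠ ∅) :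
    some (θ ++ wtake w n, C) ∈ L.Gmap θ w ξ := by
  refine ⟨⟨hCB, hne⟩, θ.length + n, natCast_length_add_le_wlen_wappend.2 hn, C, ?_, ?_⟩
  · rw [L.Jfamily_length_add hn hpos]
    exact ⟨C, hC, (inter_eq_left.2 hCB.2).symm⟩
  · rw [wtake_wappend_length_add]
    exact L.ESle_refl _

theorem Gmap_append_subset {α β : List A} (hβ : β ≠ []) {w : LWord A}
    {ξ : Set (Option (List A × Set V))}
    (hξ : ∀ n : ℕ, (n : ℕ∞) ≤ wlen w → IsFilterIn (L.Bw (wtake w n)) (L.xiN w ξ n))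
    (hr : ∀ n : ℕ, (n : ℕ∞) ≤ wlen w → L.wr (α ++ β ++ wtake w n) ∈ L.xiN w ξ n) :
    L.Gmap (α ++ β) w ξ ⊆ L.Gmap α (wappend β w) (L.Gmap β w ξ) := by
  intro p hp
  obtain ⟨n, hn, hpos, C, hC, hCp⟩ := L.exists_gmap_le_of_mem_Gmap hp
  have hCB := (hξ n hn).1 hC
  have hrB := (hξ n hn).1 (hr n hn)
  set S := C ∩ L.wr (α ++ β ++ wtake w n)
  have hS : S ∈ L.xiN w ξ n :=
    (hξ n hn).inter_mem hC (hr n hn) ⟨L.inter_mem hCB.1 hrB.1, inter_subset_left.trans hCB.2⟩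
  have hSB : S ∈ L.Bw (β ++ wtake w n) := ⟨L.inter_mem hCB.1 hrB.1,
    inter_subset_right.trans (by rw [List.append_assoc]; exact L.wr_append_subset _ _)⟩
  have hβS : some (β ++ wtake w n, S) ∈ L.Gmap β w ξ :=
    L.some_mem_Gmap hn hpos hS hSB fun h => (hξ n hn).2.2.1 (h ▸ hS)
  have hβn : ((β.length + n : ℕ) : ℕ∞) ≤ wlen (wappend β w) :=
    natCast_length_add_le_wlen_wappend.2 hn
  refine ⟨hp.1, α.length + (β.length + n), natCast_length_add_le_wlen_wappend.2 hβn, S, ?_, ?_⟩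
  · rw [L.Jfamily_length_add hβn (Or.inl (by simp [List.length_pos_iff.2 hβ]))]
    refine ⟨S, ?_, ?_⟩
    · show some (wtake (wappend β w) (β.length + n), S) ∈ L.Gmap β w ξ
      rwa [wtake_wappend_length_add]
    · rw [wtake_wappend_length_add, ← List.append_assoc]
      exact (inter_eq_left.2 inter_subset_right).symm
  · rwa [wtake_wappend_length_add, wtake_wappend_length_add, ← List.append_assoc]

theorem Gmap_Gmap_subset (hwlr : L.WeaklyLeftResolving) {α β : List A} (hα : α ≠ [])
    {w : LWord A} (hαβw : L.IsLWord (wappend (α ++ β) w)) (ξ : Set (Option (List A × Set V))) :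
    L.Gmap α (wappend β w) (L.Gmap β w ξ) ⊆ L.Gmap (α ++ β) w ξ := by
  intro p hp
  obtain ⟨m, -, -, D, hD, hDp⟩ := L.exists_gmap_le_of_mem_Gmap hp
  have hD : some (wtake (wappend β w) m, D) ∈ L.Gmap β w ξ := hD
  obtain ⟨n, hn, hpos, C, hC, hCD⟩ := L.exists_gmap_le_of_mem_Gmap hD
  have hαm : L.wr (α ++ wtake (wappend β w) m) ∈ L.ℬ := by
    refine L.range_mem _ (by simp [hα]) ?_
    rw [← wtake_wappend_length_add, wappend_wappend]
    exact L.isLbl_wtake hαβw _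
  have hSD : L.ESle (some (β ++ wtake w n, C ∩ L.wr (α ++ β ++ wtake w n)))
      (some (wtake (wappend β w) m, D)) :=
    L.ESle_trans (L.ESle_some_of_subset (inter_subset_inter_right _
      (by rw [List.append_assoc]; exact L.wr_append_subset _ _))) hCD
  refine ⟨hp.1, (α ++ β).length + n, natCast_length_add_le_wlen_wappend.2 hn,
    C ∩ L.wr (α ++ β ++ wtake w n), by rw [L.Jfamily_length_add hn hpos]; exact ⟨C, hC, rfl⟩, ?_⟩
  rw [wtake_wappend_length_add]
  refine L.ESle_trans ?_ hDp
  simpa using L.ESle_append_left hwlr hD.1.1.1 hαm (by simp) hSD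

end LabelledSpace

section
variable {V Edg A : Type*} (L : LabelledSpace V Edg A)

theorem Gmap_comp (hwlr : L.WeaklyLeftResolving)
    (α β : List A) (hα : α ≠ []) (hβ : β ≠ []) (hαβl : L.IsLbl (α ++ β))
    (w : LWord A) (hw : L.IsLWord w) (hαβw : L.IsLWord (wappend (α ++ β) w)) :
    L.TwP (α ++ β) w ⊆ L.TwP β w ∧
    ∀ ξ ∈ L.TwP (α ++ β) w,
      L.Gmap (α ++ β) w ξ = L.Gmap α (wappend β w) (L.Gmap β w ξ) := by
  have hαβ : α ++ β ≠ [] := by simp [hα]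
  refine ⟨L.TwP_append_subset hβ (hαβl.infix ⟨α, [], by simp⟩) w, fun ξ hξ => ?_⟩
  exact (L.Gmap_append_subset hβ (fun n => L.isFilterIn_xiN_of_mem_TwP hαβ hw hξ)
    (fun n => L.wr_append_mem_xiN_of_mem_TwP hαβ hw hξ)).antisymm
    (L.Gmap_Gmap_subset hwlr hα hαβw ξ)

end
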